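/- Let G be a finite simple graph with spanning tree T and co-tree C = G \ E(T), and let E_cs ⊆ E(G). Then G ⫽ E_cs is cycle-invariant if and only if E_cs ⊆ E(T) and every edge of E_cs lies on none of the fundamental tree-paths of co-tree edges (equivalently, the rows of the Tucker representation T_{(T,C)} corresponding to E_cs are all zero). -/

import Mathlib

/-!
An edge of `E_cs` lies on a cycle of `G` exactly when it is not a bridge, and for a spanning tree
`T` the bridges of `G` are the tree edges lying on no fundamental path; so it suffices to show that
`G ⫽ E_cs` is cycle-invariant iff every edge of `E_cs` is a bridge of `G`.

Every cycle of the contraction lifts injectively to a cycle of `G`: cross each contracted edge by a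
preimage edge and join consecutive preimages inside a cell by a path of `E_cs`-edges. Destuttering
the sequence of cells visited by the lift gives back the original cycle, and the lift starts with
an edge between different cells. If all edges of `E_cs` are bridges, a cycle of `G` meets each cell
at most once and two cells are joined by at most one edge, so projecting cycles is injective too,
and Schröder–Bernstein gives a bijection. If some `ε ∈ E_cs` lies on a cycle, the cycle starting
along `ε` is not a lift, so by finiteness there is no bijection.
-/

/-- The simple graph contraction of `G` over the partition of its vertex set given by the
fibers of `f` (cells are fibers): distinct cells are adjacent iff some pair of their members
is adjacent in `G` (self-loops and duplicate edges removed). -/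
def contraction {V W : Type*} (G : SimpleGraph V) (f : V → W) : SimpleGraph W where
  Adj i j := i ≠ j ∧ ∃ u v, f u = i ∧ f v = j ∧ G.Adj u v
  symm := ⟨fun _ _ ⟨hne, u, v, hu, hv, h⟩ => ⟨hne.symm, v, u, hv, hu, h.symm⟩⟩
  loopless := ⟨fun _ ⟨h, _⟩ => h rfl⟩

/-- The edge-based contraction `G ⫽ E_cs`: the contraction of `G` over the partition of
`V(G)` into connected components of the graph `(V(G), E_cs)`. -/
def contractionE {V : Type*} (G : SimpleGraph V) (Ecs : Set (Sym2 V)) :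
    SimpleGraph (SimpleGraph.fromEdgeSet Ecs).ConnectedComponent :=
  contraction G (SimpleGraph.fromEdgeSet Ecs).connectedComponentMk

/-- The type of simple cycles of a graph (as cycle walks based at a vertex). -/
def CycleType {V : Type*} (G : SimpleGraph V) := Σ v : V, {w : G.Walk v v // w.IsCycle}


namespace List

variable {α : Type*}

theorem destutter'_replicate_append {R : α → α → Prop} [DecidableRel R] {a : α} (ha : ¬R a a)
    (n : ℕ) (l : List α) : (replicate n a ++ l).destutter' R a = l.destutter' R a := by
  induction n with
  | zero => rfl
  | succ n ih => rw [replicate_succ, cons_append, destutter'_cons_neg _ ha, ih]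

theorem destutter_replicate_append {R : α → α → Prop} [DecidableRel R] {a : α} (ha : ¬R a a)
    (n : ℕ) (l : List α) : (replicate (n + 1) a ++ l).destutter R = (a :: l).destutter R := by
  rw [replicate_succ, cons_append, destutter_cons', destutter_cons',
    destutter'_replicate_append ha]

theorem destutter_cons_cons_of_rel {R : α → α → Prop} [DecidableRel R] {a b : α} (h : R a b)
    (l : List α) : (a :: b :: l).destutter R = a :: (b :: l).destutter R := by
  rw [destutter_cons_cons, if_pos h, destutter_cons']

theorem mem_destutter'_ne [DecidableEq α] {a b : α} :
    ∀ {l : List α}, b ∈ a :: l → b ∈ l.destutter' (· ≠ ·) a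
  | [], h => by simpa using h
  | c :: l, h => by
    by_cases hca : c = a
    · subst hca
      rw [destutter'_cons_neg _ (not_not_intro rfl)]
      exact mem_destutter'_ne (by simp_all)
    · rw [destutter'_cons_pos _ (Ne.symm hca)]
      rcases mem_cons.mp h with rfl | h
      · exact mem_cons_self
      · exact mem_cons_of_mem _ (mem_destutter'_ne h)

theorem mem_destutter_ne [DecidableEq α] {b : α} : ∀ {l : List α}, b ∈ l → b ∈ l.destutter (· ≠ ·)
  | _ :: _, h => by rw [destutter_cons']; exact mem_destutter'_ne h

end List

namespace SimpleGraph.Walk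

variable {V : Type*} {G : SimpleGraph V}

@[simp]
theorem head?_support {u v : V} (p : G.Walk u v) : p.support.head? = some u := by
  cases p <;> rfl

theorem isCycle_of_three_le_length {v : V} {c : G.Walk v v} (h3 : 3 ≤ c.length)
    (hc : c.support.tail.Nodup) : c.IsCycle := by
  cases c with
  | nil => simp at h3
  | cons h p =>
    have hp : p.IsPath := IsPath.mk' (by simpa using hc)
    refine (cons_isCycle_iff p h).mpr ⟨hp, fun he => ?_⟩
    have := hp.length_eq_one_of_mem_edges (Sym2.eq_swap ▸ he)
    simp only [length_cons] at h3
    omega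

theorem map_connectedComponentMk_support {u v : V} (p : G.Walk u v) :
    p.support.map G.connectedComponentMk =
      List.replicate (p.length + 1) (G.connectedComponentMk u) := by
  induction p with
  | nil => rfl
  | cons h p ih =>
    rw [support_cons, List.map_cons, ih, ConnectedComponent.connectedComponentMk_eq_of_adj h]
    rfl

end SimpleGraph.Walk

theorem contraction_adj {V W : Type*} {G : SimpleGraph V} {f : V → W} {i j : W} :
    (contraction G f).Adj i j ↔ i ≠ j ∧ ∃ u v, f u = i ∧ f v = j ∧ G.Adj u v :=
  Iff.rfl

theorem CycleType.ext_support {V : Type*} {G : SimpleGraph V} {s t : CycleType G}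
    (h : s.2.1.support = t.2.1.support) : s = t := by
  obtain ⟨v, c, hc⟩ := s
  obtain ⟨w, d, hd⟩ := t
  obtain rfl : v = w := by simpa using congrArg List.head? h
  obtain rfl := SimpleGraph.Walk.ext_support h
  rfl

theorem CycleType.finite {V : Type*} [Finite V] (G : SimpleGraph V) : Finite (CycleType G) := by
  have := Fintype.ofFinite V
  have := (List.finite_length_le V (Fintype.card V + 1)).to_subtype
  have hlen (s : CycleType G) : s.2.1.support.length ≤ Fintype.card V + 1 := by
    obtain ⟨v, c, hc⟩ := s
    have := hc.support_nodup.length_le_card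
    rw [← c.cons_tail_support, List.length_cons]
    omega
  exact Finite.of_injective (fun s : CycleType G => (⟨s.2.1.support, hlen s⟩ :
    {l : List V | l.length ≤ Fintype.card V + 1}))
    fun s t h => CycleType.ext_support (congrArg Subtype.val h)

namespace SimpleGraph

variable {V W : Type*} {G H T : SimpleGraph V}

theorem exists_walk_contraction_of_injOn {f : V → W} {a b : V} (p : G.Walk a b)
    (hf : Set.InjOn f {x | x ∈ p.support}) :
    ∃ q : (contraction G f).Walk (f a) (f b), q.support = p.support.map f := by
  induction p with
  | nil => exact ⟨.nil, rfl⟩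
  | cons h p ih =>
    obtain ⟨q, hq⟩ := ih (hf.mono fun x hx => List.mem_cons_of_mem _ hx)
    have hne : f _ ≠ f _ := fun he => h.ne (hf (by simp) (by simp) he)
    refine ⟨.cons (contraction_adj.mpr ⟨hne, _, _, rfl, rfl, h⟩) q, ?_⟩
    rw [Walk.support_cons, hq, Walk.support_cons, List.map_cons]

theorem exists_isCycle_contraction_of_injOn {f : V → W} {v : V} {c : G.Walk v v}
    (hc : c.IsCycle) (hf : Set.InjOn f {x | x ∈ c.support}) :
    ∃ q : (contraction G f).Walk (f v) (f v), q.IsCycle ∧ q.support = c.support.map f := by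
  obtain ⟨q, hq⟩ := exists_walk_contraction_of_injOn c hf
  refine ⟨q, Walk.isCycle_of_three_le_length ?_ ?_, hq⟩
  · have := congrArg List.length hq
    simp only [Walk.length_support, List.length_map] at this
    have := hc.three_le_length
    omega
  · rw [hq, ← List.map_tail]
    exact hc.support_nodup.map_on fun x hx y hy => hf (List.mem_of_mem_tail hx)
      (List.mem_of_mem_tail hy)

open scoped Classical in
theorem exists_isPath_lift (hHG : H ≤ G) {C D : H.ConnectedComponent}
    (q : (contraction G H.connectedComponentMk).Walk C D) (hq : q.support.Nodup) {x y : V}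
    (hx : H.connectedComponentMk x = C) (hy : H.connectedComponentMk y = D) :
    ∃ w : G.Walk x y, w.IsPath ∧
      (w.support.map H.connectedComponentMk).destutter (· ≠ ·) = q.support := by
  induction q generalizing x with
  | nil =>
    obtain ⟨p, hp⟩ := (ConnectedComponent.exact (hx.trans hy.symm)).exists_isPath
    refine ⟨p.mapLe hHG, hp.mapLe hHG, ?_⟩
    rw [Walk.support_mapLe_eq_support, Walk.map_connectedComponentMk_support, hx,
      ← List.append_nil (List.replicate _ _), List.destutter_replicate_append (not_not_intro rfl)]
    rfl
  | cons h r ih =>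
    obtain ⟨hne, u, v, hu, hv, huv⟩ := contraction_adj.mp h
    rw [Walk.support_cons, List.nodup_cons] at hq
    obtain ⟨p, hp⟩ := (ConnectedComponent.exact (hx.trans hu.symm)).exists_isPath
    obtain ⟨w, hw, hwr⟩ := ih hq.2 hv hy
    have hpC : ∀ z ∈ p.support, H.connectedComponentMk z = _ := fun z hz =>
      List.eq_of_mem_replicate (p.map_connectedComponentMk_support ▸ List.mem_map_of_mem hz)
    refine ⟨(p.mapLe hHG).append (.cons huv w), ?_, ?_⟩
    · rw [Walk.isPath_def, Walk.support_append, Walk.support_cons, List.tail_cons,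
        Walk.support_mapLe_eq_support, List.nodup_append]
      refine ⟨hp.support_nodup, hw.support_nodup, fun z hzp z' hzw hzz' => hq.1 ?_⟩
      subst hzz'
      rw [← hx, ← hpC z hzp, ← hwr]
      exact List.mem_destutter_ne (List.mem_map_of_mem hzw)
    · rw [Walk.support_append, Walk.support_cons, List.tail_cons, Walk.support_mapLe_eq_support,
        List.map_append, p.map_connectedComponentMk_support, hx,
        List.destutter_replicate_append (not_not_intro rfl), ← w.cons_tail_support, List.map_cons,
        List.destutter_cons_cons_of_rel (hv ▸ hu ▸ hne), ← List.map_cons, w.cons_tail_support, hwr,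
        Walk.support_cons]

open scoped Classical in
theorem exists_isCycle_lift (hHG : H ≤ G) (s : CycleType (contraction G H.connectedComponentMk)) :
    ∃ t : CycleType G,
      (t.2.1.support.map H.connectedComponentMk).destutter (· ≠ ·) = s.2.1.support ∧
      H.connectedComponentMk t.1 ≠ H.connectedComponentMk t.2.1.snd := by
  obtain ⟨C, c, hc⟩ := s
  cases c with
  | nil => exact absurd hc Walk.not_isCycle_nil
  | cons h q =>
    obtain ⟨hq, -⟩ := (Walk.cons_isCycle_iff q h).mp hc
    obtain ⟨hne, x, y, hx, hy, hxy⟩ := contraction_adj.mp h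
    obtain ⟨w, hw, hwq⟩ := exists_isPath_lift hHG q hq.support_nodup hy hx
    have hlen : q.length ≤ w.length := by
      have := (List.destutter_sublist (· ≠ ·) (w.support.map H.connectedComponentMk)).length_le
      rw [hwq, List.length_map, Walk.length_support, Walk.length_support] at this
      omega
    have hcyc : (Walk.cons hxy w).IsCycle := by
      refine Walk.isCycle_of_three_le_length ?_ (by simpa using hw.support_nodup)
      have := hc.three_le_length
      simp only [Walk.length_cons] at this ⊢
      omega
    refine ⟨⟨x, .cons hxy w, hcyc⟩, ?_, ?_⟩
    · show ((Walk.cons hxy w).support.map _).destutter _ = (Walk.cons h q).support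
      rw [Walk.support_cons, List.map_cons, ← w.cons_tail_support, List.map_cons,
        List.destutter_cons_cons_of_rel (hx ▸ hy ▸ hne), ← List.map_cons, w.cons_tail_support,
        hwq, Walk.support_cons, hx]
    · show _ ≠ H.connectedComponentMk (Walk.cons hxy w).snd
      rw [Walk.snd_cons, hx, hy]
      exact hne

theorem exists_injective_lift (hHG : H ≤ G) :
    ∃ J : CycleType (contraction G H.connectedComponentMk) → CycleType G, J.Injective ∧
      ∀ s, H.connectedComponentMk (J s).1 ≠ H.connectedComponentMk (J s).2.1.snd := by
  choose J hJ hJsnd using exists_isCycle_lift hHG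
  exact ⟨J, fun s t hst => CycleType.ext_support ((hJ s).symm.trans (hst ▸ hJ t)), hJsnd⟩

theorem eq_of_reachable_of_walk_avoiding (hHG : H ≤ G) (hbr : ∀ e ∈ H.edgeSet, G.IsBridge e)
    {u w : V} (hr : H.Reachable u w) (W : G.Walk u w)
    (hW : ∀ z, H.Adj u z → s(u, z) ∉ W.edges) : u = w := by
  obtain ⟨p, hp⟩ := hr.exists_isPath
  cases p with
  | nil => rfl
  | cons huz p =>
    have hmem := isBridge_iff_forall_walk_mem_edges.mp (hbr s(u, _) huz)
      (W.append (p.mapLe hHG).reverse)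
    rw [Walk.edges_append, Walk.edges_reverse, Walk.edges_mapLe_eq_edges, List.mem_append,
      List.mem_reverse] at hmem
    rcases hmem with h | h
    · exact absurd h (hW _ huz)
    · exact absurd (p.fst_mem_support_of_mem_edges h) ((Walk.cons_isPath_iff huz p).mp hp).2

theorem injOn_connectedComponentMk_support (hHG : H ≤ G) (hbr : ∀ e ∈ H.edgeSet, G.IsBridge e)
    {v : V} {c : G.Walk v v} (hc : c.IsCycle) :
    Set.InjOn H.connectedComponentMk {x | x ∈ c.support} := by
  classical
  intro u hu w hw huw
  refine eq_of_reachable_of_walk_avoiding hHG hbr (ConnectedComponent.exact huw)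
    ((c.dropUntil u hu).append (c.takeUntil w hw)) fun z huz h => ?_
  refine (hbr s(u, z) huz).notMem_edges_of_isCycle hc ?_
  rw [Walk.edges_append, List.mem_append] at h
  exact h.elim (c.edges_dropUntil_subset_edges hu ·) (c.edges_takeUntil_subset_edges hw ·)

theorem eq_of_adj_of_adj_of_connectedComponentMk_eq (hHG : H ≤ G)
    (hbr : ∀ e ∈ H.edgeSet, G.IsBridge e) {u v u' v' : V} (huv : G.Adj u v) (hu'v' : G.Adj u' v')
    (hu : H.connectedComponentMk u = H.connectedComponentMk u')
    (hv : H.connectedComponentMk v = H.connectedComponentMk v')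
    (hcross : H.connectedComponentMk u ≠ H.connectedComponentMk v) : u = u' := by
  -- Every edge of the walk `u → v ⇝ v' → u'` has an endpoint in the component of `v`, whereas the
  -- edges `s(u, z)` to be avoided lie inside the component of `u`.
  obtain ⟨q⟩ := ConnectedComponent.exact hv
  refine eq_of_reachable_of_walk_avoiding hHG hbr (ConnectedComponent.exact hu)
    (.cons huv ((q.mapLe hHG).append (.cons hu'v'.symm .nil))) fun z huz h => ?_
  have hzu := ConnectedComponent.connectedComponentMk_eq_of_adj huz
  rw [Walk.edges_cons, Walk.edges_append, Walk.edges_mapLe_eq_edges, Walk.edges_cons,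
    Walk.edges_nil, List.mem_cons, List.mem_append, List.mem_singleton, Sym2.eq_iff,
    Sym2.eq_iff] at h
  rcases h with (⟨-, rfl⟩ | ⟨rfl, -⟩) | hq | ⟨rfl, -⟩ | ⟨-, rfl⟩
  · exact hcross hzu
  · exact hcross rfl
  · exact hcross (List.eq_of_mem_replicate (q.map_connectedComponentMk_support ▸
      List.mem_map_of_mem (q.fst_mem_support_of_mem_edges hq)))
  · exact hcross hv.symm
  · exact hcross (hzu.trans hv.symm)

theorem support_eq_of_map_support_eq (hHG : H ≤ G) (hbr : ∀ e ∈ H.edgeSet, G.IsBridge e)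
    {a b b' : V} (p : G.Walk a b) (p' : G.Walk a b')
    (hp : Set.InjOn H.connectedComponentMk {x | x ∈ p.support})
    (h : p.support.map H.connectedComponentMk = p'.support.map H.connectedComponentMk) :
    p.support = p'.support := by
  induction p with
  | nil =>
    cases p' with
    | nil => rfl
    | cons _ q' => simpa using congrArg List.length h
  | cons hac q ih =>
    cases p' with
    | nil => simpa using congrArg List.length h
    | cons hac' q' =>
      rw [Walk.support_cons, Walk.support_cons, List.map_cons, List.map_cons,
        List.cons_inj_right] at h
      have hcross : H.connectedComponentMk _ ≠ H.connectedComponentMk _ :=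
        fun he => hac.ne (hp (by simp) (by simp) he).symm
      obtain rfl := eq_of_adj_of_adj_of_connectedComponentMk_eq hHG hbr hac.symm hac'.symm
        (by simpa using congrArg List.head? h) rfl hcross
      rw [Walk.support_cons, Walk.support_cons,
        ih q' (hp.mono fun x hx => List.mem_cons_of_mem _ hx) h]

theorem exists_injective_push (hHG : H ≤ G) (hbr : ∀ e ∈ H.edgeSet, G.IsBridge e) :
    ∃ F : CycleType G → CycleType (contraction G H.connectedComponentMk), F.Injective := by
  have hF (s : CycleType G) : ∃ t : CycleType (contraction G H.connectedComponentMk),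
      t.2.1.support = s.2.1.support.map H.connectedComponentMk := by
    obtain ⟨v, c, hc⟩ := s
    obtain ⟨q, hq, hqc⟩ :=
      exists_isCycle_contraction_of_injOn hc (injOn_connectedComponentMk_support hHG hbr hc)
    exact ⟨⟨_, q, hq⟩, hqc⟩
  choose F hF using hF
  refine ⟨F, fun s t hst => CycleType.ext_support ?_⟩
  have h := (hF s).symm.trans (hst ▸ hF t)
  obtain ⟨v, c, hc⟩ := s
  obtain ⟨v', c', hc'⟩ := t
  cases c with
  | nil => exact absurd hc Walk.not_isCycle_nil
  | cons hvu q =>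
    cases c' with
    | nil => exact absurd hc' Walk.not_isCycle_nil
    | cons hvu' q' =>
      have hinj := injOn_connectedComponentMk_support hHG hbr hc
      simp only [Walk.support_cons, List.map_cons, List.cons.injEq] at h
      obtain rfl := eq_of_adj_of_adj_of_connectedComponentMk_eq hHG hbr hvu hvu' h.1
        (by simpa using congrArg List.head? h.2) fun he => hvu.ne (hinj (by simp) (by simp) he)
      exact support_eq_of_map_support_eq hHG hbr _ (.cons hvu' q') hinj
        (by simp only [Walk.support_cons, List.map_cons, h.2])

theorem nonempty_equiv_cycleType_contraction_of_forall_isBridge (hHG : H ≤ G)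
    (hbr : ∀ e ∈ H.edgeSet, G.IsBridge e) :
    Nonempty (CycleType G ≃ CycleType (contraction G H.connectedComponentMk)) := by
  obtain ⟨F, hF⟩ := exists_injective_push hHG hbr
  obtain ⟨J, hJ, -⟩ := exists_injective_lift hHG
  obtain ⟨f, hf⟩ := Function.Embedding.schroeder_bernstein hF hJ
  exact ⟨.ofBijective f hf⟩

theorem exists_isCycle_cons_of_not_isBridge {v w : V} (h : G.Adj v w)
    (hb : ¬G.IsBridge s(v, w)) : ∃ p : G.Walk v w, (Walk.cons h.symm p).IsCycle := by
  classical
  rw [isBridge_iff, not_not, reachable_deleteEdges_iff_exists_walk] at hb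
  obtain ⟨p, hp⟩ := hb
  refine ⟨p.toPath, Path.cons_isCycle _ _ fun he => hp ?_⟩
  exact Sym2.eq_swap ▸ p.edges_toPath_subset_edges he

theorem forall_isBridge_of_nonempty_equiv_cycleType_contraction [Finite V] (hHG : H ≤ G)
    (hΦ : Nonempty (CycleType G ≃ CycleType (contraction G H.connectedComponentMk))) :
    ∀ e ∈ H.edgeSet, G.IsBridge e := by
  obtain ⟨Φ⟩ := hΦ
  obtain ⟨J, hJ, hJsnd⟩ := exists_injective_lift hHG
  have := CycleType.finite G
  have hsurj := Finite.injective_iff_surjective.mp (hJ.comp Φ.injective)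
  rintro ⟨v, w⟩ he
  by_contra hb
  obtain ⟨p, hp⟩ := exists_isCycle_cons_of_not_isBridge (hHG he) hb
  obtain ⟨s, hs⟩ := hsurj ⟨w, _, hp⟩
  have hcross := hJsnd (Φ s)
  rw [Function.comp_apply] at hs
  rw [hs] at hcross
  change H.connectedComponentMk w ≠ H.connectedComponentMk (Walk.cons _ p).snd at hcross
  rw [Walk.snd_cons] at hcross
  exact hcross (ConnectedComponent.connectedComponentMk_eq_of_adj he).symm

theorem nonempty_equiv_cycleType_contraction_iff [Finite V] (hHG : H ≤ G) :
    Nonempty (CycleType G ≃ CycleType (contraction G H.connectedComponentMk)) ↔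
      ∀ e ∈ H.edgeSet, G.IsBridge e :=
  ⟨forall_isBridge_of_nonempty_equiv_cycleType_contraction hHG,
    nonempty_equiv_cycleType_contraction_of_forall_isBridge hHG⟩

theorem isCycle_cons_mapLe_of_not_adj (hTG : T ≤ G) {a b : V} (hab : G.Adj a b)
    (hnT : ¬T.Adj a b) {p : T.Walk a b} (hp : p.IsPath) :
    (Walk.cons hab.symm (p.mapLe hTG)).IsCycle := by
  refine (Walk.cons_isCycle_iff _ _).mpr ⟨hp.mapLe hTG, fun he => hnT ?_⟩
  rw [Walk.edges_mapLe_eq_edges] at he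
  exact (T.mem_edgeSet.mp (p.edges_subset_edgeSet he)).symm

theorem reachable_deleteEdges_of_notMem_fundamental_paths (hT : T.Connected) {e : Sym2 V}
    (hfund : ∀ a b, G.Adj a b → ¬T.Adj a b → ∀ p : T.Walk a b, p.IsPath → e ∉ p.edges)
    {x y : V} (h : (G.deleteEdges {e}).Reachable x y) : (T.deleteEdges {e}).Reachable x y := by
  rw [reachable_iff_reflTransGen] at h ⊢
  refine Relation.ReflTransGen.lift' id (fun a b hab => ?_) x y h
  rw [deleteEdges_adj] at hab
  by_cases hT_ab : T.Adj a b
  · exact .single (deleteEdges_adj.mpr ⟨hT_ab, hab.2⟩)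
  · obtain ⟨p, hp⟩ := hT.exists_isPath a b
    exact (reachable_iff_reflTransGen a b).mp (p.toDeleteEdges {e} fun e' he' he'e =>
      hfund a b hab.1 hT_ab p hp ((Set.mem_singleton_iff.mp he'e) ▸ he')).reachable

theorem isBridge_iff_of_isTree (hTG : T ≤ G) (hT : T.IsTree) {e : Sym2 V} (he : e ∈ G.edgeSet) :
    G.IsBridge e ↔ e ∈ T.edgeSet ∧
      ∀ a b, G.Adj a b → ¬T.Adj a b → ∀ p : T.Walk a b, p.IsPath → e ∉ p.edges := by
  induction e using Sym2.ind with | _ u v => ?_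
  constructor
  · intro hbr
    refine ⟨?_, fun a b hab hnT p hp hep => ?_⟩
    · by_contra hnT
      obtain ⟨p, hp⟩ := hT.connected.exists_isPath u v
      exact hbr.notMem_edges_of_isCycle (isCycle_cons_mapLe_of_not_adj hTG he hnT hp)
        (by simp [Sym2.eq_swap])
    · exact hbr.notMem_edges_of_isCycle (isCycle_cons_mapLe_of_not_adj hTG hab hnT hp)
        (by simp [hep])
  · rintro ⟨hT_uv, hfund⟩
    exact fun hr => isAcyclic_iff_forall_isBridge.mp hT.isAcyclic hT_uv
      (reachable_deleteEdges_of_notMem_fundamental_paths hT.connected hfund hr)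

end SimpleGraph

theorem cycle_invariant_iff_tucker_rows_zero_general {n : ℕ}
    (G T : SimpleGraph (Fin n)) (hTG : T ≤ G) (hT : T.IsTree)
    (Ecs : Set (Sym2 (Fin n))) (hE : Ecs ⊆ G.edgeSet) :
    Nonempty (CycleType G ≃ CycleType (contractionE G Ecs)) ↔
      (Ecs ⊆ T.edgeSet ∧
        ∀ a b : Fin n, G.Adj a b → ¬T.Adj a b →
          ∀ p : T.Walk a b, p.IsPath → ∀ ε ∈ Ecs, ε ∉ p.edges) := by
  have hHG : SimpleGraph.fromEdgeSet Ecs ≤ G := fun _ _ h => hE h.1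
  have hEcs : (SimpleGraph.fromEdgeSet Ecs).edgeSet = Ecs := by
    rw [SimpleGraph.edgeSet_fromEdgeSet, sdiff_eq_left, Set.disjoint_left]
    exact fun e he => G.not_isDiag_of_mem_edgeSet (hE he)
  rw [contractionE, SimpleGraph.nonempty_equiv_cycleType_contraction_iff hHG, hEcs]
  have hrow {e} (he : e ∈ Ecs) := SimpleGraph.isBridge_iff_of_isTree hTG hT (hE he)
  constructor
  · intro h
    exact ⟨fun e he => ((hrow he).mp (h e he)).1,
      fun a b hab hnT p hp e he => ((hrow he).mp (h e he)).2 a b hab hnT p hp⟩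
  · rintro ⟨hsub, hfund⟩ e he
    exact (hrow he).mpr ⟨hsub he, fun a b hab hnT p hp => hfund a b hab hnT p hp e he⟩

/-- Let `T` be a spanning tree of `G` (with co-tree `G \ E(T)`) and
`E_cs ⊆ E(G)`. Then `G ⫽ E_cs` is cycle-invariant (a one-to-one correspondence between
simple cycles of `G` and of `G ⫽ E_cs`) iff `E_cs ⊆ E(T)` and no edge of `E_cs` lies on
the fundamental tree-path of any co-tree edge (i.e., the corresponding rows of the Tucker
representation are all zero). -/
theorem cycle_invariant_iff_tucker_rows_zero {n : ℕ}
    (G T : SimpleGraph (Fin n)) (hG : G.Connected) (hTG : T ≤ G) (hT : T.IsTree)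
    (Ecs : Set (Sym2 (Fin n))) (hE : Ecs ⊆ G.edgeSet) :
    Nonempty (CycleType G ≃ CycleType (contractionE G Ecs)) ↔
      (Ecs ⊆ T.edgeSet ∧
        ∀ a b : Fin n, G.Adj a b → ¬T.Adj a b →
          ∀ p : T.Walk a b, p.IsPath → ∀ ε ∈ Ecs, ε ∉ p.edges) :=
  cycle_invariant_iff_tucker_rows_zero_general G T hTG hT Ecs hE
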